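/- For all subsets J ⊆ J' ⊆ E and every q ∈ ℤ_{>0}, the product Π_{ℓ=1}^{r(J)} gcd(q, e_{ℓ,J'}) divides the product Π_{ℓ=1}^{r(J)} gcd(q, e_{ℓ,J}); in particular the quotient (Π_{ℓ=1}^{r(J)} gcd(q, e_{ℓ,J})) / (Π_{ℓ=1}^{r(J)} gcd(q, e_{ℓ,J'})) is a positive integer. -/

import Mathlib

/-!
Write `d_s` for the gcd of the `s × s` minors, so that `e_ℓ = d_ℓ / d_{ℓ-1}`. A Smith normal form of
the lattice spanned by the columns shows that `d_s` is the gcd of the products of `s` distinct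
diagonal entries of a diagonal matrix with nonzero diagonal and at least `r` columns; hence
`d_s ≠ 0` for `s ≤ r` and `d_{s+1}² ∣ d_s d_{s+2}`, i.e. `e_ℓ ∣ e_{ℓ+1}`. Since the columns of
`G_J` are among those of `G_{J'}`, also `d'_s ∣ d_s`.

Now fix a prime `p` and let `a = v_p(q)`. As `v_p(e_ℓ)` increases with `ℓ`, the sum
`∑_{ℓ ≤ r} min(a, v_p(e_ℓ))` equals `v_p(d_s) + (r - s) a` for a suitable `s ≤ r`, while the same
sum for `e'` is at most `v_p(d'_s) + (r - s) a` for every `s`.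
-/

open scoped BigOperators

namespace ArrCode

variable {k n : ℕ}

/-- The integer matrix `G` with entries reduced modulo `q`. -/
def Gmod (G : Matrix (Fin k) (Fin n) ℤ) (q : ℕ) : Matrix (Fin k) (Fin n) (ZMod q) :=
  G.map (Int.cast : ℤ → ZMod q)

/-- The code `C_G(q)` over `ℤ/qℤ` generated by the rows of `G`. -/
def code (G : Matrix (Fin k) (Fin n) ℤ) (q : ℕ) : Set (Fin n → ZMod q) :=
  Set.range fun u : Fin k → ZMod q => Matrix.vecMul u (Gmod G q)

/-- `H_J(q) = { u ∈ (ℤ/qℤ)^k : u · g^j = 0 for all j ∈ J }`. -/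
def HJ (G : Matrix (Fin k) (Fin n) ℤ) (J : Finset (Fin n)) (q : ℕ) :
    Set (Fin k → ZMod q) :=
  {u | ∀ j ∈ J, Matrix.vecMul u (Gmod G q) j = 0}

/-- The rank `r(J)` over `ℚ` of the column submatrix `G_J`. -/
noncomputable def rk (G : Matrix (Fin k) (Fin n) ℤ) (J : Finset (Fin n)) : ℕ :=
  Matrix.rank (Matrix.of fun (i : Fin k) (j : J) => (G i j.1 : ℚ))

/-- The gcd of all `j × j` minors of the column submatrix `G_J`
(determinants of submatrices with repeated rows or columns vanish,
so this agrees with the usual minor gcd). -/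
def minorGcd (G : Matrix (Fin k) (Fin n) ℤ) (J : Finset (Fin n)) (j : ℕ) : ℕ :=
  Finset.gcd Finset.univ fun p : (Fin j → Fin k) × (Fin j → J) =>
    ((G.submatrix p.1 fun l => (p.2 l : Fin n)).det).natAbs

/-- The `ℓ`-th elementary divisor (invariant factor) `e_{ℓ,J}` of `G_J`,
characterized by `e_{1,J} ⋯ e_{j,J} =` gcd of all `j × j` minors of `G_J`. -/
def elemDiv (G : Matrix (Fin k) (Fin n) ℤ) (J : Finset (Fin n)) (ℓ : ℕ) : ℕ :=
  minorGcd G J ℓ / minorGcd G J (ℓ - 1)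

/-- The lcm period `ρ₀ = lcm { e_{r(J),J} : ∅ ≠ J ⊆ E }`. -/
noncomputable def lcmPeriod (G : Matrix (Fin k) (Fin n) ℤ) : ℕ :=
  Finset.lcm ((Finset.univ : Finset (Fin n)).powerset.filter fun J => J ≠ ∅)
    fun J => elemDiv G J (rk G J)

/-- The minimum weight `d_q` of `C_G(q)` (equal to `+∞` when the code is trivial). -/
noncomputable def minWt (G : Matrix (Fin k) (Fin n) ℤ) (q : ℕ) : ℕ∞ :=
  ⨅ (c : Fin n → ZMod q) (_ : c ∈ code G q) (_ : c ≠ 0), (hammingNorm c : ℕ∞)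

/-- `A_{G,i}(q)`: the number of codewords of `C_G(q)` of Hamming weight `i`. -/
noncomputable def A (G : Matrix (Fin k) (Fin n) ℤ) (q i : ℕ) : ℕ :=
  {c ∈ code G q | hammingNorm c = i}.ncard

/-- The characteristic quasi-polynomial value: the number of `u ∈ (ℤ/qℤ)^k`
with every coordinate of `uG` nonzero. -/
noncomputable def chiQuasi (G : Matrix (Fin k) (Fin n) ℤ) (q : ℕ) : ℕ :=
  {u : Fin k → ZMod q | ∀ j, Matrix.vecMul u (Gmod G q) j ≠ 0}.ncard

/-- `Π_{ℓ=1}^{r(J)} gcd(m, e_{ℓ,J})`. -/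
noncomputable def gcdProd (G : Matrix (Fin k) (Fin n) ℤ) (m : ℕ) (J : Finset (Fin n)) : ℕ :=
  ∏ ℓ ∈ Finset.Icc 1 (rk G J), Nat.gcd m (elemDiv G J ℓ)

/-- The constituent polynomial `f_i^m(t) ∈ ℚ[t]`. -/
noncomputable def fPoly (G : Matrix (Fin k) (Fin n) ℤ) (m i : ℕ) : Polynomial ℚ :=
  ∑ J ∈ (Finset.univ : Finset (Fin n)).powerset.filter (fun J => J.card = n - i),
    ∑ K ∈ (Finset.univ : Finset (Fin n)).powerset.filter (fun K => J ⊆ K),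
      Polynomial.C ((-1 : ℚ) ^ (K.card - J.card) *
          (gcdProd G m K : ℚ) / (gcdProd G m Finset.univ : ℚ)) *
        Polynomial.X ^ (rk G Finset.univ - rk G K)

/-- `d'_m`: the least positive `i` such that `f_i^m` is not the zero polynomial. -/
noncomputable def dPrime (G : Matrix (Fin k) (Fin n) ℤ) (m : ℕ) : ℕ :=
  sInf {i : ℕ | 0 < i ∧ fPoly G m i ≠ 0}

end ArrCode

namespace Nat

variable {ι : Type*} [Fintype ι]

/-- The `s × s` minor gcd of the diagonal matrix with diagonal `b`. -/
def gcdProdSubsets (b : ι → ℕ) (s : ℕ) : ℕ :=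
  (Finset.univ.powersetCard s).gcd fun S => ∏ i ∈ S, b i

theorem gcdProdSubsets_dvd (b : ι → ℕ) {s : ℕ} {S : Finset ι} (hS : S.card = s) :
    gcdProdSubsets b s ∣ ∏ i ∈ S, b i :=
  Finset.gcd_dvd (Finset.mem_powersetCard.mpr ⟨S.subset_univ, hS⟩)

theorem gcdProdSubsets_dvd_succ (b : ι → ℕ) (s : ℕ) :
    gcdProdSubsets b s ∣ gcdProdSubsets b (s + 1) := by
  refine Finset.dvd_gcd fun S hS => ?_
  obtain ⟨T, hTS, hT⟩ := Finset.exists_subset_card_eq (s := S) (n := s)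
    (by rw [(Finset.mem_powersetCard.mp hS).2]; omega)
  exact (gcdProdSubsets_dvd b hT).trans (Finset.prod_dvd_prod_of_subset _ _ _ hTS)

theorem gcdProdSubsets_ne_zero {b : ι → ℕ} (hb : ∀ i, b i ≠ 0) {s : ℕ}
    (hs : s ≤ Fintype.card ι) : gcdProdSubsets b s ≠ 0 := by
  obtain ⟨S, -, hS⟩ := Finset.exists_subset_card_eq (s := Finset.univ) (n := s) hs
  exact fun h => Finset.prod_ne_zero_iff.mpr (fun i _ => hb i) (Nat.eq_zero_of_zero_dvd
    (h ▸ gcdProdSubsets_dvd b hS))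

theorem sq_gcdProdSubsets_succ_dvd (b : ι → ℕ) (s : ℕ) :
    gcdProdSubsets b (s + 1) ^ 2 ∣ gcdProdSubsets b s * gcdProdSubsets b (s + 2) := by
  classical
  have key : ∀ S ∈ Finset.univ.powersetCard s, ∀ T ∈ Finset.univ.powersetCard (s + 2),
      gcdProdSubsets b (s + 1) ^ 2 ∣ (∏ i ∈ S, b i) * ∏ i ∈ T, b i := by
    intro S hS T hT
    rw [Finset.mem_powersetCard] at hS hT
    -- trade an element of `T \ S` from `T` to `S`: both sets then have `s + 1` elements
    obtain ⟨x, hxT, hxS⟩ : ∃ x ∈ T, x ∉ S :=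
      Finset.not_subset.mp fun h => by have := Finset.card_le_card h; omega
    rw [← Finset.mul_prod_erase T b hxT, sq, show (∏ i ∈ S, b i) * (b x * ∏ i ∈ T.erase x, b i)
      = (∏ i ∈ insert x S, b i) * ∏ i ∈ T.erase x, b i by rw [Finset.prod_insert hxS]; ring]
    exact mul_dvd_mul
      (gcdProdSubsets_dvd b (by rw [Finset.card_insert_of_notMem hxS]; omega))
      (gcdProdSubsets_dvd b (by rw [Finset.card_erase_of_mem hxT]; omega))
  have h : gcdProdSubsets b (s + 1) ^ 2 ∣
      (Finset.univ.powersetCard s).gcd fun S => (∏ i ∈ S, b i) * gcdProdSubsets b (s + 2) :=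
    Finset.dvd_gcd fun S hS => by
      have h := Finset.dvd_gcd fun T hT => key S hS T hT
      rwa [Finset.gcd_mul_left, normalize_eq] at h
  rwa [Finset.gcd_mul_right, normalize_eq] at h

end Nat

namespace Matrix

theorem det_mul_eq_sum_det_submatrix {n β R : Type*} [Fintype n] [DecidableEq n] [Fintype β]
    [CommRing R] (M : Matrix n β R) (N : Matrix β n R) :
    (M * N).det = ∑ p : n → β, (∏ i, N (p i) i) * (M.submatrix id p).det := by
  simp only [det_apply', mul_apply, Finset.prod_univ_sum, Finset.mul_sum,
    Fintype.piFinset_univ, submatrix_apply, id]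
  rw [Finset.sum_comm]
  refine Finset.sum_congr rfl fun p _ => Finset.sum_congr rfl fun σ _ => ?_
  rw [Finset.prod_mul_distrib]
  ring

theorem exists_eq_mul_of_col_mem_span {α β γ R : Type*} [Fintype β] [CommSemiring R]
    (A : Matrix γ β R) {B : Matrix γ α R}
    (h : ∀ j, B.col j ∈ Submodule.span R (Set.range A.col)) :
    ∃ C : Matrix β α R, B = A * C := by
  simp_rw [← range_mulVecLin, LinearMap.mem_range, mulVecLin_apply] at h
  choose v hv using h
  exact ⟨of fun t j => v j t, by ext i j; exact (congrFun (hv j) i).symm⟩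

variable {α β : Type*} [Fintype α] [Fintype β]

/-- Rows and columns of the minors are selected by arbitrary maps `Fin s → _`; non-injective
selections give vanishing minors. -/
def gcdMinors (A : Matrix α β ℤ) (s : ℕ) : ℕ :=
  Finset.univ.gcd fun p : (Fin s → α) × (Fin s → β) => (A.submatrix p.1 p.2).det.natAbs

theorem gcdMinors_dvd_det (A : Matrix α β ℤ) {s : ℕ} (R : Fin s → α) (C : Fin s → β) :
    (A.gcdMinors s : ℤ) ∣ (A.submatrix R C).det :=
  Int.natCast_dvd.mpr (Finset.gcd_dvd (Finset.mem_univ (R, C)))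

theorem dvd_gcdMinors {c : ℕ} (A : Matrix α β ℤ) {s : ℕ}
    (h : ∀ (R : Fin s → α) (C : Fin s → β), (c : ℤ) ∣ (A.submatrix R C).det) :
    c ∣ A.gcdMinors s :=
  Finset.dvd_gcd fun p _ => Int.natCast_dvd.mp (h p.1 p.2)

theorem gcdMinors_zero (A : Matrix α β ℤ) : A.gcdMinors 0 = 1 :=
  Nat.dvd_one.mp <| Int.natCast_dvd.mp <| by
    simpa using A.gcdMinors_dvd_det finZeroElim finZeroElim

theorem gcdMinors_dvd_gcdMinors_transpose (A : Matrix α β ℤ) (s : ℕ) :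
    A.gcdMinors s ∣ Aᵀ.gcdMinors s :=
  dvd_gcdMinors _ fun R C => by
    simpa [← transpose_submatrix] using A.gcdMinors_dvd_det C R

theorem gcdMinors_transpose (A : Matrix α β ℤ) (s : ℕ) : Aᵀ.gcdMinors s = A.gcdMinors s :=
  Nat.dvd_antisymm (by simpa using Aᵀ.gcdMinors_dvd_gcdMinors_transpose s)
    (A.gcdMinors_dvd_gcdMinors_transpose s)

theorem gcdMinors_dvd_gcdMinors_submatrix {α' β' : Type*} [Fintype α'] [Fintype β']
    (A : Matrix α β ℤ) (r : α' → α) (c : β' → β) (s : ℕ) :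
    A.gcdMinors s ∣ (A.submatrix r c).gcdMinors s :=
  dvd_gcdMinors _ fun R C => by simpa using A.gcdMinors_dvd_det (r ∘ R) (c ∘ C)

theorem gcdMinors_dvd_gcdMinors_mul_right {γ : Type*} [Fintype γ] (A : Matrix α β ℤ)
    (C : Matrix β γ ℤ) (s : ℕ) : A.gcdMinors s ∣ (A * C).gcdMinors s :=
  dvd_gcdMinors _ fun R K => by
    rw [show (A * C).submatrix R K = A.submatrix R id * C.submatrix id K by
      ext; simp [mul_apply], det_mul_eq_sum_det_submatrix]
    exact Finset.dvd_sum fun p _ => Dvd.dvd.mul_left (by simpa using A.gcdMinors_dvd_det R p) _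

theorem gcdMinors_dvd_gcdMinors_mul_left {γ : Type*} [Fintype γ] (M : Matrix γ α ℤ)
    (A : Matrix α β ℤ) (s : ℕ) : A.gcdMinors s ∣ (M * A).gcdMinors s := by
  rw [← gcdMinors_transpose (M * A), ← gcdMinors_transpose A, transpose_mul]
  exact Aᵀ.gcdMinors_dvd_gcdMinors_mul_right Mᵀ s

theorem gcdMinors_mul_left_of_mul_eq_one [DecidableEq α] {M M' : Matrix α α ℤ} (h : M' * M = 1)
    (A : Matrix α β ℤ) (s : ℕ) : (M * A).gcdMinors s = A.gcdMinors s := by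
  have h' := gcdMinors_dvd_gcdMinors_mul_left M' (M * A) s
  rw [← Matrix.mul_assoc, h, Matrix.one_mul] at h'
  exact Nat.dvd_antisymm h' (gcdMinors_dvd_gcdMinors_mul_left M A s)

theorem gcdMinors_of_embedding {ι : Type*} [Fintype ι] [DecidableEq α] (f : ι ↪ α)
    (a : ι → ℤ) (s : ℕ) :
    (of fun t l => if t = f l then a l else 0 : Matrix α ι ℤ).gcdMinors s
      = Nat.gcdProdSubsets (fun l => (a l).natAbs) s := by
  set W : Matrix α ι ℤ := of fun t l => if t = f l then a l else 0
  have natAbs_prod : ∀ {κ : Type _} [Fintype κ] (C : κ → ι),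
      (∏ j, a (C j)).natAbs = ∏ j, (a (C j)).natAbs := fun C => map_prod Int.natAbsHom _ _
  refine Nat.dvd_antisymm (Finset.dvd_gcd fun S hS => ?_) (dvd_gcdMinors W fun R C => ?_)
  · obtain ⟨-, hS⟩ := Finset.mem_powersetCard.mp hS
    let e : S ≃ Fin s := Fintype.equivFinOfCardEq (by simp [hS])
    let C : Fin s → ι := fun j => e.symm j
    have hC : Function.Injective C := Subtype.val_injective.comp e.symm.injective
    have hdiag : W.submatrix (f ∘ C) C = diagonal fun j => a (C j) := by
      ext i j
      by_cases hij : i = j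
      · simp [W, hij]
      · simp [W, hij, hC.ne hij]
    have h := Int.natCast_dvd.mp (gcdMinors_dvd_det W (f ∘ C) C)
    rwa [hdiag, det_diagonal, natAbs_prod, e.symm.prod_comp (fun i => (a i).natAbs),
      Finset.prod_coe_sort S fun i => (a i).natAbs] at h
  · by_cases hC : Function.Injective C
    · rw [show W.submatrix R C = (of fun i j => if R i = f (C j) then 1 else 0) *
          diagonal fun j => a (C j) by ext; simp [W, mul_diagonal], det_mul, det_diagonal]
      refine Dvd.dvd.mul_left (Int.natCast_dvd.mpr ?_) _
      rw [natAbs_prod]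
      simpa using Nat.gcdProdSubsets_dvd (fun l => (a l).natAbs)
        (S := Finset.univ.map ⟨C, hC⟩) (by simp)
    · obtain ⟨x, y, hxy, hne⟩ := Function.not_injective_iff.mp hC
      rw [det_zero_of_column_eq hne fun i => by simp [hxy]]
      exact dvd_zero _

theorem exists_gcdMinors_eq_gcdProdSubsets (A : Matrix α β ℤ) :
    ∃ (m : ℕ) (b : Fin m → ℕ), (∀ l, b l ≠ 0) ∧ (∀ s, A.gcdMinors s = Nat.gcdProdSubsets b s) ∧
      (A.map (Int.cast : ℤ → ℚ)).rank ≤ m := by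
  classical
  obtain ⟨m, bM, bN, f, a, snf⟩ :=
    (Submodule.span ℤ (Set.range A.col)).smithNormalForm (Pi.basisFun ℤ α)
  set W : Matrix α (Fin m) ℤ := of fun t l => if t = f l then a l else 0
  set Q := (Pi.basisFun ℤ α).toMatrix bM
  -- `Q` has the basis `bM` as columns, so `Q * W` has the basis `bN` of the column lattice
  have hcol : ∀ l, (Q * W).col l = bN l := fun l => by
    ext i
    simp [Q, W, mul_apply, snf l, Module.Basis.toMatrix_apply, mul_comm]
  have hspan : Submodule.span ℤ (Set.range (Q * W).col) = Submodule.span ℤ (Set.range A.col) := by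
    rw [show (Q * W).col = Submodule.subtype _ ∘ bN from funext hcol, Set.range_comp,
      Submodule.span_image, bN.span_eq, Submodule.map_top, Submodule.range_subtype]
  obtain ⟨C, hC⟩ := exists_eq_mul_of_col_mem_span (Q * W) (B := A) fun j =>
    hspan ▸ Submodule.subset_span ⟨j, rfl⟩
  obtain ⟨C', hC'⟩ := exists_eq_mul_of_col_mem_span A (B := Q * W) fun l =>
    hspan.symm ▸ Submodule.subset_span ⟨l, rfl⟩
  have ha : ∀ l, a l ≠ 0 := fun l h => bN.ne_zero l (Subtype.ext (by simp [snf l, h]))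
  refine ⟨m, fun l => (a l).natAbs, fun l => Int.natAbs_ne_zero.mpr (ha l), fun s => ?_, ?_⟩
  · calc A.gcdMinors s = (Q * W).gcdMinors s := by
          refine Nat.dvd_antisymm ?_ ?_
          · rw [hC']; exact A.gcdMinors_dvd_gcdMinors_mul_right C' s
          · conv_rhs => rw [hC]
            exact (Q * W).gcdMinors_dvd_gcdMinors_mul_right C s
      _ = W.gcdMinors s := gcdMinors_mul_left_of_mul_eq_one (bM.toMatrix_mul_toMatrix_flip _) W s
      _ = _ := gcdMinors_of_embedding f a s
  · rw [hC, show (Q * W * C).map (Int.cast : ℤ → ℚ) = (Q * W * C).map (Int.castRingHom ℚ) from rfl,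
      Matrix.map_mul]
    exact (rank_mul_le_left _ _).trans ((rank_le_card_width _).trans (by simp))

section

variable (A : Matrix α β ℤ)

theorem gcdMinors_dvd_gcdMinors_succ (s : ℕ) : A.gcdMinors s ∣ A.gcdMinors (s + 1) := by
  obtain ⟨m, b, -, hb, -⟩ := A.exists_gcdMinors_eq_gcdProdSubsets
  simpa only [hb] using Nat.gcdProdSubsets_dvd_succ b s

theorem sq_gcdMinors_succ_dvd (s : ℕ) :
    A.gcdMinors (s + 1) ^ 2 ∣ A.gcdMinors s * A.gcdMinors (s + 2) := by
  obtain ⟨m, b, -, hb, -⟩ := A.exists_gcdMinors_eq_gcdProdSubsets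
  simpa only [hb] using Nat.sq_gcdProdSubsets_succ_dvd b s

theorem gcdMinors_ne_zero {s : ℕ} (hs : s ≤ (A.map (Int.cast : ℤ → ℚ)).rank) :
    A.gcdMinors s ≠ 0 := by
  obtain ⟨m, b, hb0, hb, hrank⟩ := A.exists_gcdMinors_eq_gcdProdSubsets
  rw [hb]
  exact Nat.gcdProdSubsets_ne_zero hb0 (by simpa using hs.trans hrank)

def invariantFactor (ℓ : ℕ) : ℕ :=
  A.gcdMinors ℓ / A.gcdMinors (ℓ - 1)

theorem invariantFactor_succ_mul_gcdMinors (ℓ : ℕ) :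
    A.invariantFactor (ℓ + 1) * A.gcdMinors ℓ = A.gcdMinors (ℓ + 1) :=
  Nat.div_mul_cancel (A.gcdMinors_dvd_gcdMinors_succ ℓ)

theorem prod_Icc_invariantFactor (s : ℕ) :
    ∏ ℓ ∈ Finset.Icc 1 s, A.invariantFactor ℓ = A.gcdMinors s := by
  induction s with
  | zero => simp [gcdMinors_zero]
  | succ s ih =>
    rw [Finset.prod_Icc_succ_top (by omega), ih, mul_comm, invariantFactor_succ_mul_gcdMinors]

theorem invariantFactor_dvd_invariantFactor_succ {ℓ : ℕ}
    (hℓ : ℓ + 1 ≤ (A.map (Int.cast : ℤ → ℚ)).rank) :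
    A.invariantFactor ℓ ∣ A.invariantFactor (ℓ + 1) := by
  cases ℓ with
  | zero => simp [invariantFactor, gcdMinors_zero]
  | succ t =>
    have hd := A.gcdMinors_ne_zero (s := t + 1) (by omega)
    rw [← A.invariantFactor_succ_mul_gcdMinors t] at hd
    have h := A.sq_gcdMinors_succ_dvd t
    rw [← A.invariantFactor_succ_mul_gcdMinors (t + 1),
      ← A.invariantFactor_succ_mul_gcdMinors t] at h
    set d := A.gcdMinors t
    set e := A.invariantFactor (t + 1)
    refine (Nat.mul_dvd_mul_iff_left (Nat.pos_of_ne_zero (mul_ne_zero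
      (pow_ne_zero 2 (right_ne_zero_of_mul hd)) (left_ne_zero_of_mul hd)))).mp ?_
    calc d ^ 2 * e * e = (e * d) ^ 2 := by ring
      _ ∣ d * (A.invariantFactor (t + 2) * (e * d)) := h
      _ = d ^ 2 * e * A.invariantFactor (t + 2) := by ring

end

end Matrix

namespace Nat

theorem exists_sum_Icc_min_eq (a : ℕ) {x : ℕ → ℕ} : ∀ {r : ℕ}, MonotoneOn x (Set.Icc 1 r) →
    ∃ s ≤ r, ∑ ℓ ∈ Finset.Icc 1 r, min a (x ℓ) = ∑ ℓ ∈ Finset.Icc 1 s, x ℓ + (r - s) * a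
  | 0, _ => ⟨0, le_rfl, by simp⟩
  | r + 1, hx => by
    rw [Finset.sum_Icc_succ_top (show 1 ≤ r + 1 by omega)]
    by_cases h : a ≤ x (r + 1)
    · obtain ⟨s, hs, hsum⟩ :=
        exists_sum_Icc_min_eq a (r := r) (hx.mono (Set.Icc_subset_Icc_right (by omega)))
      refine ⟨s, by omega, ?_⟩
      rw [hsum, min_eq_left h, show r + 1 - s = r - s + 1 by omega]
      ring
    · refine ⟨r + 1, le_rfl, ?_⟩
      rw [Finset.sum_Icc_succ_top (show 1 ≤ r + 1 by omega), Nat.sub_self, zero_mul, add_zero,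
        min_eq_right (by omega)]
      congr 1
      refine Finset.sum_congr rfl fun ℓ hℓ => min_eq_right ?_
      obtain ⟨h1, h2⟩ := Finset.mem_Icc.mp hℓ
      have := hx ⟨h1, by omega⟩ ⟨by omega, le_rfl⟩ (by omega)
      omega

theorem sum_Icc_min_le (a : ℕ) (y : ℕ → ℕ) {s r : ℕ} (hs : s ≤ r) :
    ∑ ℓ ∈ Finset.Icc 1 r, min a (y ℓ) ≤ ∑ ℓ ∈ Finset.Icc 1 s, y ℓ + (r - s) * a := by
  induction r, hs using Nat.le_induction with
  | base => simpa using Finset.sum_le_sum fun ℓ _ => min_le_right a (y ℓ)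
  | succ r hsr ih =>
    rw [Finset.sum_Icc_succ_top (by omega), show r + 1 - s = r - s + 1 by omega, add_mul, one_mul]
    have := min_le_left a (y (r + 1))
    omega

theorem sum_Icc_min_le_sum_Icc_min (a : ℕ) {x y : ℕ → ℕ} {r : ℕ}
    (hx : MonotoneOn x (Set.Icc 1 r))
    (hxy : ∀ s ≤ r, ∑ ℓ ∈ Finset.Icc 1 s, y ℓ ≤ ∑ ℓ ∈ Finset.Icc 1 s, x ℓ) :
    ∑ ℓ ∈ Finset.Icc 1 r, min a (y ℓ) ≤ ∑ ℓ ∈ Finset.Icc 1 r, min a (x ℓ) := by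
  obtain ⟨s, hs, hsum⟩ := exists_sum_Icc_min_eq a hx
  rw [hsum]
  exact (sum_Icc_min_le a y hs).trans (by have := hxy s hs; omega)

theorem factorization_prod_gcd_apply {ι : Type*} {q : ℕ} (hq : q ≠ 0) {s : Finset ι}
    {f : ι → ℕ} (hf : ∀ i ∈ s, f i ≠ 0) (p : ℕ) :
    (∏ i ∈ s, Nat.gcd q (f i)).factorization p
      = ∑ i ∈ s, min (q.factorization p) ((f i).factorization p) := by
  rw [factorization_prod fun i _ => gcd_ne_zero_left hq, Finset.sum_apply']
  exact Finset.sum_congr rfl fun i hi => by rw [factorization_gcd hq (hf i hi)]; rfl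

theorem prod_Icc_gcd_dvd_prod_Icc_gcd (q : ℕ) {e e' : ℕ → ℕ} {r : ℕ}
    (he : ∀ ℓ ∈ Finset.Ico 1 r, e ℓ ∣ e (ℓ + 1)) (hprod : ∏ ℓ ∈ Finset.Icc 1 r, e ℓ ≠ 0)
    (he' : ∀ s ≤ r, ∏ ℓ ∈ Finset.Icc 1 s, e' ℓ ∣ ∏ ℓ ∈ Finset.Icc 1 s, e ℓ) :
    ∏ ℓ ∈ Finset.Icc 1 r, Nat.gcd q (e' ℓ) ∣ ∏ ℓ ∈ Finset.Icc 1 r, Nat.gcd q (e ℓ) := by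
  rcases eq_or_ne q 0 with rfl | hq
  · simpa using he' r le_rfl
  have he0 : ∀ ℓ ∈ Finset.Icc 1 r, e ℓ ≠ 0 := Finset.prod_ne_zero_iff.mp hprod
  have he'0 : ∀ ℓ ∈ Finset.Icc 1 r, e' ℓ ≠ 0 :=
    Finset.prod_ne_zero_iff.mp (ne_zero_of_dvd_ne_zero hprod (he' r le_rfl))
  have hgcd0 : ∀ f : ℕ → ℕ, ∏ ℓ ∈ Finset.Icc 1 r, Nat.gcd q (f ℓ) ≠ 0 := fun f =>
    Finset.prod_ne_zero_iff.mpr fun ℓ _ => gcd_ne_zero_left hq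
  rw [← factorization_le_iff_dvd (hgcd0 _) (hgcd0 _)]
  intro p
  rw [factorization_prod_gcd_apply hq he'0, factorization_prod_gcd_apply hq he0]
  refine sum_Icc_min_le_sum_Icc_min _ ?_ fun s hs => ?_
  · refine monotoneOn_of_le_add_one Set.ordConnected_Icc fun ℓ _ h1 h2 => ?_
    exact (factorization_le_iff_dvd (he0 ℓ (Finset.mem_Icc.mpr h1))
      (he0 (ℓ + 1) (Finset.mem_Icc.mpr h2))).mpr (he ℓ (Finset.mem_Ico.mpr ⟨h1.1, h2.2⟩)) p
  · have hsub := Finset.Icc_subset_Icc_right (a := 1) hs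
    have hs0 : ∏ ℓ ∈ Finset.Icc 1 s, e ℓ ≠ 0 :=
      Finset.prod_ne_zero_iff.mpr fun ℓ hℓ => he0 ℓ (hsub hℓ)
    have h := (factorization_le_iff_dvd (ne_zero_of_dvd_ne_zero hs0 (he' s hs)) hs0).mpr
      (he' s hs) p
    rwa [factorization_prod fun ℓ hℓ => he'0 ℓ (hsub hℓ),
      factorization_prod fun ℓ hℓ => he0 ℓ (hsub hℓ), Finset.sum_apply', Finset.sum_apply'] at h

end Nat

namespace ArrCode

theorem stmt12_general (k n : ℕ) (G : Matrix (Fin k) (Fin n) ℤ)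
    (J J' : Finset (Fin n)) (hJJ' : J ⊆ J') (q : ℕ) :
    (∏ ℓ ∈ Finset.Icc 1 (rk G J), Nat.gcd q (elemDiv G J' ℓ)) ∣
      (∏ ℓ ∈ Finset.Icc 1 (rk G J), Nat.gcd q (elemDiv G J ℓ)) := by
  set A := G.submatrix id ((↑) : J → Fin n)
  set A' := G.submatrix id ((↑) : J' → Fin n)
  have hrank : rk G J = (A.map (Int.cast : ℤ → ℚ)).rank := rfl
  refine Nat.prod_Icc_gcd_dvd_prod_Icc_gcd q (e := A.invariantFactor) (e' := A'.invariantFactor)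
    (fun ℓ hℓ => A.invariantFactor_dvd_invariantFactor_succ (hrank ▸ (Finset.mem_Ico.mp hℓ).2))
    ?_ fun s _ => ?_
  · rw [A.prod_Icc_invariantFactor]
    exact A.gcdMinors_ne_zero hrank.le
  · rw [A.prod_Icc_invariantFactor, A'.prod_Icc_invariantFactor]
    exact A'.gcdMinors_dvd_gcdMinors_submatrix id (fun j : J => ⟨j.1, hJJ' j.2⟩) s

theorem stmt12 (k n : ℕ) (hk : 1 ≤ k) (hn : 1 ≤ n) (G : Matrix (Fin k) (Fin n) ℤ)
    (hG : ∀ j : Fin n, ∃ i : Fin k, G i j ≠ 0)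
    (J J' : Finset (Fin n)) (hJJ' : J ⊆ J') (q : ℕ) (hq : 0 < q) :
    (∏ ℓ ∈ Finset.Icc 1 (rk G J), Nat.gcd q (elemDiv G J' ℓ)) ∣
      (∏ ℓ ∈ Finset.Icc 1 (rk G J), Nat.gcd q (elemDiv G J ℓ)) :=
  stmt12_general k n G J J' hJJ' q

end ArrCode
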